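/- Let m ≥ 2 be an integer and α > 0 a real number, and set t̂ = arctan(√(α/(m−1))). Then for every t ∈ (0, π/2) with t ≠ t̂, the function g_{m,α}(t) = (m+α)·sin(2t)/((m+α−1)·cos(2t) − (m−α−1)) satisfies H_{m,α}(t, g_{m,α}(t)) = 0 and has nonnegative derivative, g_{m,α}'(t) ≥ 0; in particular g_{m,α} is an upper solution of the ODE w' = H_{m,α}(t,w) on (0,t̂) ∪ (t̂, π/2). -/

import Mathlib

/-- The right-hand side `H_{m,α}(t,w)` of the first-order ODE for `w = v̇`. -/
noncomputable def Hrhs (m : ℕ) (α : ℝ) (t w : ℝ) : ℝ :=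
  (1 + w ^ 2) *
    ((m : ℝ) + α +
      (((m : ℝ) - α - 1 - ((m : ℝ) + α - 1) * Real.cos (2 * t)) / Real.sin (2 * t)) * w)

/-- The explicit upper solution `g_{m,α}(t)`. -/
noncomputable def gUpper (m : ℕ) (α : ℝ) (t : ℝ) : ℝ :=
  ((m : ℝ) + α) * Real.sin (2 * t) /
    (((m : ℝ) + α - 1) * Real.cos (2 * t) - ((m : ℝ) - α - 1))

/-- The cone angle `t̂ = arctan √(α/(m−1))`. -/
noncomputable def tHat (m : ℕ) (α : ℝ) : ℝ :=
  Real.arctan (Real.sqrt (α / ((m : ℝ) - 1)))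

/-! With `s = sin 2t` and `D = (m+α-1) cos 2t - (m-α-1)`, the coefficient of `w` in `H_{m,α}`
is `-D/s`, so `H_{m,α}(t, w)` vanishes exactly at `w = (m+α) s / D = g_{m,α}(t)`. The quotient
rule gives `g_{m,α}' = 2(m+α)((m+α-1) - (m-α-1) cos 2t) / D²`, and the bracket equals
`α (1 + cos 2t) + (m-1)(1 - cos 2t) ≥ 0`. Finally `D` vanishes on `(0, π/2)` only where
`cos 2t = cos 2t̂`, by the double-angle formula for `cos (2 arctan x)`. -/

open Real Set

theorem Real.cos_two_mul_arctan (x : ℝ) : cos (2 * arctan x) = (1 - x ^ 2) / (1 + x ^ 2) := by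
  rw [cos_two_mul, cos_sq_arctan]
  field_simp
  ring

theorem Real.hasDerivAt_sin_two_mul_div (a p q t : ℝ) (hD : p * cos (2 * t) - q ≠ 0) :
    HasDerivAt (fun x => a * sin (2 * x) / (p * cos (2 * x) - q))
      (2 * a * (p - q * cos (2 * t)) / (p * cos (2 * t) - q) ^ 2) t := by
  have h2 : HasDerivAt (fun x : ℝ => 2 * x) 2 t := by
    simpa using (hasDerivAt_id t).const_mul 2
  refine ((h2.sin.const_mul a).div ((h2.cos.const_mul p).sub_const q) hD).congr_deriv ?_
  congr 1
  linear_combination (2 * a * p) * sin_sq_add_cos_sq (2 * t)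

noncomputable def gDenom (m : ℕ) (α t : ℝ) : ℝ :=
  ((m : ℝ) + α - 1) * cos (2 * t) - ((m : ℝ) - α - 1)

theorem Hrhs_eq (m : ℕ) (α t w : ℝ) :
    Hrhs m α t w = (1 + w ^ 2) * ((m : ℝ) + α - gDenom m α t / sin (2 * t) * w) := by
  unfold Hrhs gDenom
  ring

theorem Hrhs_gUpper {m : ℕ} {α t : ℝ} (hs : sin (2 * t) ≠ 0) (hD : gDenom m α t ≠ 0) :
    Hrhs m α t (gUpper m α t) = 0 := by
  have hg : gUpper m α t = ((m : ℝ) + α) * sin (2 * t) / gDenom m α t := rfl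
  rw [Hrhs_eq, hg]
  field_simp
  ring

theorem hasDerivAt_gUpper {m : ℕ} {α t : ℝ} (hD : gDenom m α t ≠ 0) :
    HasDerivAt (gUpper m α)
      (2 * ((m : ℝ) + α) * (((m : ℝ) + α - 1) - ((m : ℝ) - α - 1) * cos (2 * t)) /
        gDenom m α t ^ 2) t :=
  hasDerivAt_sin_two_mul_div _ _ _ t hD

theorem deriv_gUpper_nonneg {m : ℕ} (hm : 1 ≤ m) {α t : ℝ} (hα : 0 ≤ α)
    (hD : gDenom m α t ≠ 0) : 0 ≤ deriv (gUpper m α) t := by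
  rw [(hasDerivAt_gUpper hD).deriv]
  have hm1 : (1 : ℝ) ≤ m := by exact_mod_cast hm
  have hbracket : ((m : ℝ) + α - 1) - ((m : ℝ) - α - 1) * cos (2 * t)
      = α * (1 + cos (2 * t)) + ((m : ℝ) - 1) * (1 - cos (2 * t)) := by ring
  have hc₁ := neg_one_le_cos (2 * t)
  have hc₂ := cos_le_one (2 * t)
  rw [hbracket]
  exact div_nonneg (mul_nonneg (by positivity) (add_nonneg (mul_nonneg hα (by linarith))
    (mul_nonneg (by linarith) (by linarith)))) (sq_nonneg _)

theorem tHat_mem_Ico (m : ℕ) (α : ℝ) : tHat m α ∈ Ico 0 (π / 2) :=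
  ⟨arctan_nonneg.2 (sqrt_nonneg _), arctan_lt_pi_div_two _⟩

theorem gDenom_tHat {m : ℕ} (hm : 2 ≤ m) {α : ℝ} (hα : 0 ≤ α) : gDenom m α (tHat m α) = 0 := by
  have hm1 : (0 : ℝ) < m - 1 := by
    have : (2 : ℝ) ≤ m := by exact_mod_cast hm
    linarith
  rw [gDenom, tHat, cos_two_mul_arctan, sq_sqrt (div_nonneg hα hm1.le)]
  have : 1 + α / ((m : ℝ) - 1) ≠ 0 := by positivity
  field_simp
  ring

theorem eq_tHat_of_gDenom_eq_zero {m : ℕ} (hm : 2 ≤ m) {α t : ℝ} (hα : 0 ≤ α)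
    (ht : t ∈ Icc 0 (π / 2)) (hD : gDenom m α t = 0) : t = tHat m α := by
  have hm1 : (1 : ℝ) < m := by exact_mod_cast hm
  have hcos : cos (2 * t) = cos (2 * tHat m α) := by
    have hD' := gDenom_tHat hm hα
    unfold gDenom at hD hD'
    exact mul_left_cancel₀ (by linarith : (m : ℝ) + α - 1 ≠ 0) (by linarith)
  obtain ⟨h0, h1⟩ := tHat_mem_Ico m α
  have := injOn_cos ⟨by linarith [ht.1], by linarith [ht.2]⟩ ⟨by linarith, by linarith⟩ hcos
  linarith

/-- On `(0, π/2) \ {t̂}` the function `g_{m,α}` satisfies `H_{m,α}(t, g_{m,α}(t)) = 0` and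
`g_{m,α}'(t) ≥ 0`; in particular `g_{m,α}'(t) ≥ H_{m,α}(t, g_{m,α}(t))`, i.e. `g_{m,α}` is an
upper solution of `w' = H_{m,α}(t, w)` on `(0,t̂) ∪ (t̂, π/2)`. -/
theorem g_upper_solution (m : ℕ) (hm : 2 ≤ m) (α : ℝ) (hα : 0 < α)
    (t : ℝ) (ht : t ∈ Set.Ioo 0 (Real.pi / 2)) (ht' : t ≠ tHat m α) :
    Hrhs m α t (gUpper m α t) = 0 ∧ deriv (gUpper m α) t ≥ 0 ∧
      deriv (gUpper m α) t ≥ Hrhs m α t (gUpper m α t) := by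
  have hs : sin (2 * t) ≠ 0 :=
    (sin_pos_of_pos_of_lt_pi (by linarith [ht.1]) (by linarith [ht.2])).ne'
  have hD : gDenom m α t ≠ 0 := fun h =>
    ht' (eq_tHat_of_gDenom_eq_zero hm hα.le (Ioo_subset_Icc_self ht) h)
  have hH := Hrhs_gUpper hs hD
  have hg := deriv_gUpper_nonneg (by omega) hα.le hD
  exact ⟨hH, hg, hH ▸ hg⟩
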